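/- Let A ∈ ℝ^{n×n}, δ > 0, ε ≥ 0, and let X₀ = Z(c; g^(1),…,g^(p)) be a zonotope in ℝ^n with c ≠ 0 and g^(i) ≠ 0 for all i. Suppose that for each w ∈ {c, g^(1),…,g^(p)} there are matrices V_w ∈ ℝ^{n×ξ} with first column w/‖w‖ and H_w ∈ ℝ^{ξ×ξ} such that ‖exp(A t) w − ‖w‖ V_w exp(H_w t) e₁‖ ≤ ‖w‖ ε t for all t ∈ [0, δ]. Let η ≥ 2 be an integer with ‖H_w‖_∞ δ/(η+2) < 1 for every w, set Φ_w = (‖H_w‖_∞ δ)^{η+1}/((η+1)!) · 1/(1 − ‖H_w‖_∞ δ/(η+2)), and define F_w = { Σ_{i=2}^η τ_i H_w^i/i! + E : τ_i ∈ [(i^{−i/(i−1)} − i^{−1/(i−1)}) δ^i, 0], E ∈ ℝ^{ξ×ξ}, |E_{jk}| ≤ Φ_w for all j,k }. Let R̂ = Z(ĉ; ĝ^(1),…,ĝ^(p)) + { y : |y_j| ≤ (‖c‖ + Σ_i ‖g^(i)‖) ε δ for all j }, where ĉ = ‖c‖ V_c exp(H_c δ) e₁ and ĝ^(i) = ‖g^(i)‖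 V_{g^(i)} exp(H_{g^(i)} δ) e₁, and let N = { ‖c‖ V_c M_c e₁ + Σ_{i=1}^p λ_i ‖g^(i)‖ V_{g^(i)} M_i e₁ : M_c ∈ F_c, M_i ∈ F_{g^(i)}, λ_i ∈ [−1,1] }. Then ⋃_{t ∈ [0,δ]} { exp(A t) x : x ∈ X₀ } ⊆ convexHull(X₀ ∪ R̂) + N. -/

import Mathlib

/-!
Expanding the exponential as a power series,
`exp(tH) - (1 - t/δ) I - (t/δ) exp(δH) = ∑_{k ≥ 2} (t^k - t δ^(k-1)) H^k / k!`.
For `2 ≤ k ≤ η` and `t ∈ [0, δ]` the coefficient `t^k - t δ^(k-1)` lies in `[τ_k, 0]`, its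
minimum being attained at `t = δ k^(-1/(k-1))`; the tail `k > η` is bounded in the `‖·‖_∞`
operator norm, hence entrywise, by `Φ` through a geometric series of ratio `‖H‖_∞ δ / (η + 2)`.
For a generator `w`, whose trajectory `exp(At) w` is `ε t ‖w‖`-close to `‖w‖ V_w exp(H_w t) e₁`,
this writes `exp(At) w = (1 - t/δ) w + (t/δ) (ŵ + e_w) + n_w` with `n_w ∈ ‖w‖ V_w F_w e₁` and
`‖e_w‖ ≤ ‖w‖ ε δ` (the error rescaled by `δ/t`). By linearity of `exp(At)` the same splitting
holds at every point of `X₀`: a convex combination of a point of `X₀` and a point of `R̂`, plus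
a point of `N`.
-/

open Matrix Set Pointwise

/-- Matrix exponential of a real square matrix. -/
noncomputable def mexp {m : ℕ} (A : Matrix (Fin m) (Fin m) ℝ) : Matrix (Fin m) (Fin m) ℝ :=
  NormedSpace.exp A

/-- Euclidean norm of a vector in `ℝ^m`. -/
noncomputable def eucNorm {m : ℕ} (x : Fin m → ℝ) : ℝ :=
  ‖(WithLp.toLp 2 x : EuclideanSpace ℝ (Fin m))‖

/-- First standard basis vector of `ℝ^ξ`. -/
noncomputable def e1 {ξ : ℕ} [NeZero ξ] : Fin ξ → ℝ := Pi.single 0 1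

/-- Maximum absolute row sum norm (`‖·‖_∞`) of a matrix. -/
noncomputable def rowSumNorm {m : ℕ} (H : Matrix (Fin m) (Fin m) ℝ) : ℝ :=
  ⨆ i, ∑ j, |H i j|

/-- Lower endpoint `(i^{−i/(i−1)} − i^{−1/(i−1)}) δ^i` of the correction interval. -/
noncomputable def tauLo (i : ℕ) (δ : ℝ) : ℝ :=
  ((i : ℝ) ^ (-(i : ℝ) / ((i : ℝ) - 1)) - (i : ℝ) ^ (-(1 : ℝ) / ((i : ℝ) - 1))) * δ ^ i

/-- The zonotope with center `c` and generators `g i`. -/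
def zonotope {n : ℕ} {ι : Type*} [Fintype ι] (c : Fin n → ℝ) (g : ι → Fin n → ℝ) :
    Set (Fin n → ℝ) :=
  {x | ∃ β : ι → ℝ, (∀ i, β i ∈ Set.Icc (-1 : ℝ) 1) ∧ x = c + ∑ i, β i • g i}

/-- The Taylor remainder bound `Φ_w`. -/
noncomputable def phiBound {ξ : ℕ} (H : Matrix (Fin ξ) (Fin ξ) ℝ) (δ : ℝ) (η : ℕ) : ℝ :=
  (rowSumNorm H * δ) ^ (η + 1) / ((Nat.factorial (η + 1) : ℝ))
    * (1 / (1 - rowSumNorm H * δ / ((η : ℝ) + 2)))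

/-- The set of correction matrices
`F = { Σ_{i=2}^η τᵢ Hⁱ/i! + E : τᵢ in the correction intervals, |E_{jk}| ≤ Φ }`. -/
def Fset {ξ : ℕ} (H : Matrix (Fin ξ) (Fin ξ) ℝ) (δ Φ : ℝ) (η : ℕ) :
    Set (Matrix (Fin ξ) (Fin ξ) ℝ) :=
  {M | ∃ (τ : ℕ → ℝ) (E : Matrix (Fin ξ) (Fin ξ) ℝ),
      (∀ i ∈ Finset.Icc 2 η, τ i ∈ Set.Icc (tauLo i δ) 0) ∧
      (∀ j k, |E j k| ≤ Φ) ∧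
      M = ∑ i ∈ Finset.Icc 2 η, (τ i / (Nat.factorial i : ℝ)) • H ^ i + E}

lemma pow_succ_tangent_le {s t : ℝ} (hs : 0 < s) (ht : 0 ≤ t) (k : ℕ) :
    s ^ (k + 1) + (k + 1) * s ^ k * (t - s) ≤ t ^ (k + 1) := by
  have bernoulli :=
    one_add_mul_le_pow (a := t / s - 1) (by linarith [div_nonneg ht hs.le]) (k + 1)
  rw [add_sub_cancel, div_pow] at bernoulli
  have := mul_le_mul_of_nonneg_right bernoulli (pow_nonneg hs.le (k + 1))
  rw [div_mul_cancel₀ _ (pow_ne_zero _ hs.ne')] at this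
  refine le_of_eq_of_le ?_ this
  have cancel : t / s * s = t := div_mul_cancel₀ t hs.ne'
  push_cast
  linear_combination -((k : ℝ) + 1) * s ^ k * cancel

lemma tauLo_le_pow_sub_mul_pow {i : ℕ} (hi : 2 ≤ i) {δ : ℝ} (hδ : 0 < δ) {t : ℝ} (ht : 0 ≤ t) :
    tauLo i δ ≤ t ^ i - t * δ ^ (i - 1) := by
  obtain ⟨m, rfl⟩ : ∃ m, i = m + 2 := ⟨i - 2, by omega⟩
  have hm : (0 : ℝ) < m + 2 := by positivity
  set a := ((m : ℝ) + 2) ^ (-1 / ((m : ℝ) + 1))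
  have ha : 0 < a := Real.rpow_pos_of_pos hm _
  have a_pow : ∀ k : ℕ, a ^ k = ((m : ℝ) + 2) ^ (-(k : ℝ) / ((m : ℝ) + 1)) := fun k => by
    rw [← Real.rpow_natCast, ← Real.rpow_mul hm.le]; ring_nf
  have hlo : tauLo (m + 2) δ = (a * δ) ^ (m + 2) - a * δ * δ ^ (m + 1) := by
    rw [tauLo, mul_pow, a_pow]
    push_cast
    rw [show (m : ℝ) + 2 - 1 = m + 1 by ring]
    ring
  -- `a δ` is the minimiser of `x ↦ x ^ i - x δ ^ (i - 1)`: the slope of `x ↦ x ^ i` there is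
  -- `δ ^ (i - 1)`, so its tangent line there gives the lower bound
  have critical : ((m : ℝ) + 1 + 1) * (a * δ) ^ (m + 1) = δ ^ (m + 1) := by
    rw [mul_pow, a_pow, Nat.cast_succ, neg_div, div_self (by positivity), Real.rpow_neg_one,
      ← mul_assoc, add_assoc, one_add_one_eq_two, mul_inv_cancel₀ hm.ne', one_mul]
  have tangent := pow_succ_tangent_le (mul_pos ha hδ) ht (m + 1)
  push_cast at tangent
  rw [critical] at tangent
  rw [hlo, show m + 2 - 1 = m + 1 by omega]
  linear_combination tangent

lemma pow_sub_mul_pow_mem_Icc_tauLo {i : ℕ} (hi : 2 ≤ i) {δ t : ℝ} (hδ : 0 < δ)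
    (ht : t ∈ Icc 0 δ) : t ^ i - t * δ ^ (i - 1) ∈ Icc (tauLo i δ) 0 := by
  refine ⟨tauLo_le_pow_sub_mul_pow hi hδ ht.1, sub_nonpos.2 ?_⟩
  calc t ^ i = t * t ^ (i - 1) := by rw [← pow_succ', Nat.sub_add_cancel (by omega)]
    _ ≤ t * δ ^ (i - 1) := mul_le_mul_of_nonneg_left (pow_le_pow_left₀ ht.1 ht.2 _) ht.1

lemma Finset.sum_range_succ_eq_add_sum_Icc {M : Type*} [AddCommMonoid M] {f : ℕ → M}
    (hf : f 1 = 0) (η : ℕ) :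
    ∑ k ∈ Finset.range (η + 1), f k = f 0 + ∑ k ∈ Finset.Icc 2 η, f k := by
  induction η with
  | zero => simp
  | succ m ih =>
    rw [Finset.sum_range_succ, ih, add_assoc]
    rcases m with _ | m
    · simp [hf]
    · rw [Finset.sum_Icc_succ_top (b := m + 1) (by omega)]

lemma pow_div_factorial_add_le {x : ℝ} (hx : 0 ≤ x) (N k : ℕ) :
    x ^ (k + N) / (k + N).factorial ≤ x ^ N / N.factorial * (x / (N + 1)) ^ k := by
  have hfac : (N.factorial * (N + 1) ^ k : ℝ) ≤ (k + N).factorial := by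
    rw [add_comm k]
    exact_mod_cast Nat.factorial_mul_pow_le_factorial
  calc x ^ (k + N) / (k + N).factorial
      ≤ x ^ (k + N) / (N.factorial * (N + 1) ^ k) := by gcongr
    _ = x ^ N / N.factorial * (x / (N + 1)) ^ k := by rw [pow_add, div_pow]; ring

lemma norm_tsum_smul_pow_le {R : Type*} [NormedRing R] [NormedSpace ℝ R] (H : R) {δ : ℝ}
    (hδ : 0 ≤ δ) {a : ℕ → ℝ} (ha : ∀ k, |a k| ≤ δ ^ k) (N : ℕ)
    (hq : ‖H‖ * δ / ((N : ℝ) + 2) < 1) :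
    ‖∑' k, (a (k + (N + 1)) / (k + (N + 1)).factorial) • H ^ (k + (N + 1))‖ ≤
      (‖H‖ * δ) ^ (N + 1) / (N + 1).factorial * (1 - ‖H‖ * δ / ((N : ℝ) + 2))⁻¹ := by
  refine tsum_of_norm_bounded ((hasSum_geometric_of_lt_one (by positivity) hq).mul_left _)
    fun k => ?_
  calc ‖(a (k + (N + 1)) / (k + (N + 1)).factorial) • H ^ (k + (N + 1))‖
      = |a (k + (N + 1))| / (k + (N + 1)).factorial * ‖H ^ (k + (N + 1))‖ := by
        rw [norm_smul, Real.norm_eq_abs, abs_div, Nat.abs_cast]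
    _ ≤ δ ^ (k + (N + 1)) / (k + (N + 1)).factorial * ‖H‖ ^ (k + (N + 1)) := by
        gcongr
        exacts [ha _, norm_pow_le' H (by omega)]
    _ = (‖H‖ * δ) ^ (k + (N + 1)) / (k + (N + 1)).factorial := by ring
    _ ≤ _ := by
        convert pow_div_factorial_add_le (x := ‖H‖ * δ) (by positivity) (N + 1) k using 4
        push_cast
        ring

section LinftyOpNorm

attribute [local instance] Matrix.linftyOpNormedAddCommGroup Matrix.linftyOpNormedRing
  Matrix.linftyOpNormedAlgebra

lemma rowSumNorm_eq_norm {m : ℕ} (H : Matrix (Fin m) (Fin m) ℝ) : rowSumNorm H = ‖H‖ := by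
  rw [rowSumNorm, Matrix.linfty_opNorm_def, Finset.sup_univ_eq_ciSup, NNReal.coe_iSup]
  simp_rw [NNReal.coe_sum, coe_nnnorm, Real.norm_eq_abs]

lemma abs_apply_le_norm {m : ℕ} (M : Matrix (Fin m) (Fin m) ℝ) (j k : Fin m) : |M j k| ≤ ‖M‖ :=
  calc |M j k| ≤ ∑ l, |M j l| :=
        Finset.single_le_sum (fun l _ => abs_nonneg (M j l)) (Finset.mem_univ k)
    _ ≤ ‖M‖ := by
        rw [← rowSumNorm_eq_norm]
        exact le_ciSup (f := fun i => ∑ l, |M i l|) (Set.finite_range _).bddAbove j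

lemma hasSum_mexp_smul {m : ℕ} (t : ℝ) (H : Matrix (Fin m) (Fin m) ℝ) :
    HasSum (fun k => (t ^ k / k.factorial) • H ^ k) (mexp (t • H)) :=
  (NormedSpace.exp_series_hasSum_exp' (𝕂 := ℝ) (t • H)).congr_fun fun k => by
    rw [smul_pow, smul_smul, div_eq_inv_mul]

lemma exists_mem_Fset_mexp_smul_eq {ξ : ℕ} (H : Matrix (Fin ξ) (Fin ξ) ℝ) {δ t : ℝ}
    (hδ : 0 < δ) (ht : t ∈ Icc 0 δ) (η : ℕ) (hsmall : rowSumNorm H * δ / ((η : ℝ) + 2) < 1) :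
    ∃ M ∈ Fset H δ (phiBound H δ η) η,
      mexp (t • H) = (1 - t / δ) • 1 + (t / δ) • mexp (δ • H) + M := by
  set a : ℕ → ℝ := fun k => t ^ k - t / δ * δ ^ k
  set f : ℕ → Matrix (Fin ξ) (Fin ξ) ℝ := fun k => (a k / k.factorial) • H ^ k
  have hf : HasSum f (mexp (t • H) - (t / δ) • mexp (δ • H)) :=
    ((hasSum_mexp_smul t H).sub ((hasSum_mexp_smul δ H).const_smul (t / δ))).congr_fun
      fun k => by simp only [f, a]; rw [smul_smul, ← sub_smul]; congr 1; ring
  have f_zero : f 0 = (1 - t / δ) • 1 := by simp [f, a]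
  have f_one : f 1 = 0 := by simp [f, a, div_mul_cancel₀ t hδ.ne']
  have f_Icc : ∀ k ∈ Finset.Icc 2 η,
      f k = ((t ^ k - t * δ ^ (k - 1)) / k.factorial) • H ^ k := fun k hk => by
    obtain ⟨k, rfl⟩ : ∃ l, k = l + 1 := ⟨k - 1, by grind⟩
    simp only [f, a, add_tsub_cancel_right, pow_succ]
    field_simp
  have ha : ∀ k, |a k| ≤ δ ^ k := fun k =>
    abs_sub_le_of_nonneg_of_le (pow_nonneg ht.1 k) (pow_le_pow_left₀ ht.1 ht.2 k)
      (by have := div_nonneg ht.1 hδ.le; positivity)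
      (mul_le_of_le_one_left (by positivity) ((div_le_one hδ).2 ht.2))
  have hE : ‖∑' k, f (k + (η + 1))‖ ≤ phiBound H δ η := by
    rw [phiBound, rowSumNorm_eq_norm, one_div]
    exact norm_tsum_smul_pow_le H hδ.le ha η (by rwa [← rowSumNorm_eq_norm])
  refine ⟨∑ k ∈ Finset.Icc 2 η, f k + ∑' k, f (k + (η + 1)),
    ⟨fun k => t ^ k - t * δ ^ (k - 1), ∑' k, f (k + (η + 1)),
      fun k hk => ?_, fun j k => ?_, ?_⟩, ?_⟩
  · exact pow_sub_mul_pow_mem_Icc_tauLo (Finset.mem_Icc.1 hk).1 hδ ht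
  · exact (abs_apply_le_norm _ j k).trans hE
  · rw [Finset.sum_congr rfl f_Icc]
  · have hsplit := hf.summable.sum_add_tsum_nat_add (η + 1)
    rw [hf.tsum_eq, Finset.sum_range_succ_eq_add_sum_Icc f_one, f_zero,
      eq_sub_iff_add_eq] at hsplit
    rw [← hsplit]
    abel

end LinftyOpNorm

lemma abs_apply_le_eucNorm {m : ℕ} (x : Fin m → ℝ) (j : Fin m) : |x j| ≤ eucNorm x := by
  simpa [eucNorm] using PiLp.norm_apply_le (WithLp.toLp 2 x) j

lemma abs_apply_add_sum_smul_le {m : ℕ} {ι : Type*} [Fintype ι] (u : Fin m → ℝ)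
    (v : ι → Fin m → ℝ) {β : ι → ℝ} (hβ : ∀ i, β i ∈ Icc (-1 : ℝ) 1) (j : Fin m) :
    |(u + ∑ i, β i • v i) j| ≤ eucNorm u + ∑ i, eucNorm (v i) := by
  rw [Pi.add_apply, Finset.sum_apply]
  refine (abs_add_le _ _).trans (add_le_add (abs_apply_le_eucNorm u j) ?_)
  refine (Finset.abs_sum_le_sum_abs _ _).trans (Finset.sum_le_sum fun i _ => ?_)
  rw [Pi.smul_apply, smul_eq_mul, abs_mul]
  exact (mul_le_of_le_one_left (abs_nonneg _) (abs_le.2 (hβ i))).trans (abs_apply_le_eucNorm _ j)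

lemma exists_eq_smul_of_norm_le {E : Type*} [NormedAddCommGroup E] [NormedSpace ℝ E] {x : E}
    {C t δ : ℝ} (hC : 0 ≤ C) (ht : 0 ≤ t) (hδ : 0 < δ) (hx : ‖x‖ ≤ C * t) :
    ∃ y : E, x = (t / δ) • y ∧ ‖y‖ ≤ C * δ := by
  rcases ht.eq_or_lt with rfl | ht
  · refine ⟨0, ?_, by simp; positivity⟩
    simpa using hx
  · refine ⟨(δ / t) • x, ?_, ?_⟩
    · rw [smul_smul, div_mul_div_comm, mul_comm t δ, div_self (by positivity), one_smul]
    · rw [norm_smul, Real.norm_of_nonneg (by positivity)]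
      calc δ / t * ‖x‖ ≤ δ / t * (C * t) := by gcongr
        _ = C * δ := by field_simp

lemma LinearMap.map_add_sum_smul_eq {V ι : Type*} [AddCommGroup V] [Module ℝ V] [Fintype ι]
    (L : V →ₗ[ℝ] V) {θ : ℝ} {c ĉ nc : V} {g ĝ ng : ι → V}
    (hc : L c = (1 - θ) • c + θ • ĉ + nc) (hg : ∀ i, L (g i) = (1 - θ) • g i + θ • ĝ i + ng i)
    (β : ι → ℝ) :
    L (c + ∑ i, β i • g i) =
      (1 - θ) • (c + ∑ i, β i • g i) + θ • (ĉ + ∑ i, β i • ĝ i) + (nc + ∑ i, β i • ng i) := by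
  simp only [map_add, map_sum, map_smul, hc, hg, smul_add, Finset.sum_add_distrib,
    Finset.smul_sum, smul_comm (β _) (1 - θ), smul_comm (β _) θ]
  abel

lemma eucNorm_smul_inv_smul {m : ℕ} (w : Fin m → ℝ) : eucNorm w • (eucNorm w)⁻¹ • w = w := by
  rcases eq_or_ne (eucNorm w) 0 with h | h
  · have hw : w = 0 := congrArg WithLp.ofLp (norm_eq_zero.1 h)
    simp [hw]
  · exact smul_inv_smul₀ h w

lemma exists_mem_Fset_mexp_mulVec_eq {n ξ : ℕ} [NeZero ξ] (A : Matrix (Fin n) (Fin n) ℝ)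
    {w : Fin n → ℝ} {V : Matrix (Fin n) (Fin ξ) ℝ} {H : Matrix (Fin ξ) (Fin ξ) ℝ}
    (hV : V *ᵥ e1 = (eucNorm w)⁻¹ • w) {δ ε t : ℝ} (hδ : 0 < δ) (hε : 0 ≤ ε) (ht : t ∈ Icc 0 δ)
    (hA : eucNorm (mexp (t • A) *ᵥ w - eucNorm w • (V *ᵥ (mexp (t • H) *ᵥ e1)))
      ≤ eucNorm w * ε * t)
    (η : ℕ) (hsmall : rowSumNorm H * δ / ((η : ℝ) + 2) < 1) :
    ∃ M ∈ Fset H δ (phiBound H δ η) η, ∃ e : Fin n → ℝ, eucNorm e ≤ eucNorm w * ε * δ ∧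
      mexp (t • A) *ᵥ w = (1 - t / δ) • w
        + (t / δ) • (eucNorm w • (V *ᵥ (mexp (δ • H) *ᵥ e1)) + e)
        + eucNorm w • (V *ᵥ (M *ᵥ e1)) := by
  obtain ⟨M, hM, hexp⟩ := exists_mem_Fset_mexp_smul_eq H hδ ht η hsmall
  obtain ⟨e, he, he_le⟩ := exists_eq_smul_of_norm_le (mul_nonneg (norm_nonneg _) hε) ht.1 hδ hA
  refine ⟨M, hM, WithLp.ofLp e, by simpa [eucNorm] using he_le, ?_⟩
  replace he := congrArg WithLp.ofLp he
  rw [WithLp.ofLp_toLp, WithLp.ofLp_smul] at he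
  have hw := eucNorm_smul_inv_smul w
  rw [← hV] at hw
  calc mexp (t • A) *ᵥ w
      = eucNorm w • (V *ᵥ (mexp (t • H) *ᵥ e1)) + (t / δ) • WithLp.ofLp e := by
        rw [← he, add_sub_cancel]
    _ = _ := by
        rw [hexp]
        simp only [Matrix.add_mulVec, Matrix.smul_mulVec, Matrix.one_mulVec, Matrix.mulVec_add,
          Matrix.mulVec_smul, smul_add, smul_comm (eucNorm w), hw]
        abel

theorem stmt10_general {n ξ p : ℕ} [NeZero ξ]
    (A : Matrix (Fin n) (Fin n) ℝ) (δ ε : ℝ) (hδ : 0 < δ) (hε : 0 ≤ ε)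
    (c : Fin n → ℝ) (g : Fin p → Fin n → ℝ)
    (Vc : Matrix (Fin n) (Fin ξ) ℝ) (Hc : Matrix (Fin ξ) (Fin ξ) ℝ)
    (Vg : Fin p → Matrix (Fin n) (Fin ξ) ℝ) (Hg : Fin p → Matrix (Fin ξ) (Fin ξ) ℝ)
    (hVc1 : Vc *ᵥ e1 = (eucNorm c)⁻¹ • c)
    (hVg1 : ∀ i, Vg i *ᵥ e1 = (eucNorm (g i))⁻¹ • g i)
    (hcb : ∀ t ∈ Set.Icc (0 : ℝ) δ,
      eucNorm (mexp (t • A) *ᵥ c - eucNorm c • (Vc *ᵥ (mexp (t • Hc) *ᵥ e1)))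
        ≤ eucNorm c * ε * t)
    (hgb : ∀ i, ∀ t ∈ Set.Icc (0 : ℝ) δ,
      eucNorm (mexp (t • A) *ᵥ g i - eucNorm (g i) • (Vg i *ᵥ (mexp (t • Hg i) *ᵥ e1)))
        ≤ eucNorm (g i) * ε * t)
    (η : ℕ)
    (hsmallc : rowSumNorm Hc * δ / ((η : ℝ) + 2) < 1)
    (hsmallg : ∀ i, rowSumNorm (Hg i) * δ / ((η : ℝ) + 2) < 1) :
    (⋃ t ∈ Set.Icc (0 : ℝ) δ, (fun x => mexp (t • A) *ᵥ x) '' zonotope c g) ⊆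
      convexHull ℝ (zonotope c g ∪
          (zonotope (eucNorm c • (Vc *ᵥ (mexp (δ • Hc) *ᵥ e1)))
              (fun i => eucNorm (g i) • (Vg i *ᵥ (mexp (δ • Hg i) *ᵥ e1)))
            + {y : Fin n → ℝ | ∀ j, |y j| ≤ (eucNorm c + ∑ i, eucNorm (g i)) * ε * δ}))
        + {x : Fin n → ℝ |
            ∃ (Mc : Matrix (Fin ξ) (Fin ξ) ℝ) (Mg : Fin p → Matrix (Fin ξ) (Fin ξ) ℝ)
              (lam : Fin p → ℝ),
              Mc ∈ Fset Hc δ (phiBound Hc δ η) η ∧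
              (∀ i, Mg i ∈ Fset (Hg i) δ (phiBound (Hg i) δ η) η) ∧
              (∀ i, lam i ∈ Set.Icc (-1 : ℝ) 1) ∧
              x = eucNorm c • (Vc *ᵥ (Mc *ᵥ e1))
                + ∑ i, lam i • (eucNorm (g i) • (Vg i *ᵥ (Mg i *ᵥ e1)))} := by
  intro y hy
  rw [Set.mem_iUnion₂] at hy
  obtain ⟨t, ht, _, ⟨β, hβ, rfl⟩, rfl⟩ := hy
  obtain ⟨Mc, hMc, ec, hec, hc⟩ :=
    exists_mem_Fset_mexp_mulVec_eq A hVc1 hδ hε ht (hcb t ht) η hsmallc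
  choose Mg hMg eg heg hg using fun i =>
    exists_mem_Fset_mexp_mulVec_eq A (hVg1 i) hδ hε ht (hgb i t ht) η (hsmallg i)
  have hsplit : mexp (t • A) *ᵥ (c + ∑ i, β i • g i) = _ :=
    (mexp (t • A)).mulVecLin.map_add_sum_smul_eq hc hg β
  have hx : c + ∑ i, β i • g i ∈ zonotope c g := ⟨β, hβ, rfl⟩
  dsimp only
  rw [hsplit]
  refine Set.add_mem_add (segment_subset_convexHull (mem_union_left _ hx) (mem_union_right _ ?_)
    ⟨1 - t / δ, t / δ, ?_, ?_, by ring, rfl⟩) ⟨Mc, Mg, β, hMc, hMg, hβ, rfl⟩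
  · have herr : ∀ j, |(ec + ∑ i, β i • eg i) j| ≤
        (eucNorm c + ∑ i, eucNorm (g i)) * ε * δ := fun j => by
      refine (abs_apply_add_sum_smul_le ec eg hβ j).trans ?_
      rw [add_mul, add_mul, Finset.sum_mul, Finset.sum_mul]
      exact add_le_add hec (Finset.sum_le_sum fun i _ => heg i)
    refine Set.mem_add.2 ⟨_, ⟨β, hβ, rfl⟩, _, herr, ?_⟩
    simp only [smul_add, Finset.sum_add_distrib]
    abel
  · exact sub_nonneg.2 ((div_le_one hδ).2 ht.2)
  · exact div_nonneg ht.1 hδ.le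

/-- Homogeneous solution for a time interval: the union over
`t ∈ [0, δ]` of the images of the zonotope `X₀` under `exp(A t)` is contained in
`conv(X₀ ∪ R̂) + N`. -/
theorem stmt10 {n ξ p : ℕ} [NeZero ξ]
    (A : Matrix (Fin n) (Fin n) ℝ) (δ ε : ℝ) (hδ : 0 < δ) (hε : 0 ≤ ε)
    (c : Fin n → ℝ) (g : Fin p → Fin n → ℝ)
    (hc0 : c ≠ 0) (hg0 : ∀ i, g i ≠ 0)
    (Vc : Matrix (Fin n) (Fin ξ) ℝ) (Hc : Matrix (Fin ξ) (Fin ξ) ℝ)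
    (Vg : Fin p → Matrix (Fin n) (Fin ξ) ℝ) (Hg : Fin p → Matrix (Fin ξ) (Fin ξ) ℝ)
    (hVc1 : Vc *ᵥ e1 = (eucNorm c)⁻¹ • c)
    (hVg1 : ∀ i, Vg i *ᵥ e1 = (eucNorm (g i))⁻¹ • g i)
    (hcb : ∀ t ∈ Set.Icc (0 : ℝ) δ,
      eucNorm (mexp (t • A) *ᵥ c - eucNorm c • (Vc *ᵥ (mexp (t • Hc) *ᵥ e1)))
        ≤ eucNorm c * ε * t)
    (hgb : ∀ i, ∀ t ∈ Set.Icc (0 : ℝ) δ,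
      eucNorm (mexp (t • A) *ᵥ g i - eucNorm (g i) • (Vg i *ᵥ (mexp (t • Hg i) *ᵥ e1)))
        ≤ eucNorm (g i) * ε * t)
    (η : ℕ) (hη : 2 ≤ η)
    (hsmallc : rowSumNorm Hc * δ / ((η : ℝ) + 2) < 1)
    (hsmallg : ∀ i, rowSumNorm (Hg i) * δ / ((η : ℝ) + 2) < 1) :
    (⋃ t ∈ Set.Icc (0 : ℝ) δ, (fun x => mexp (t • A) *ᵥ x) '' zonotope c g) ⊆
      convexHull ℝ (zonotope c g ∪
          (zonotope (eucNorm c • (Vc *ᵥ (mexp (δ • Hc) *ᵥ e1)))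
              (fun i => eucNorm (g i) • (Vg i *ᵥ (mexp (δ • Hg i) *ᵥ e1)))
            + {y : Fin n → ℝ | ∀ j, |y j| ≤ (eucNorm c + ∑ i, eucNorm (g i)) * ε * δ}))
        + {x : Fin n → ℝ |
            ∃ (Mc : Matrix (Fin ξ) (Fin ξ) ℝ) (Mg : Fin p → Matrix (Fin ξ) (Fin ξ) ℝ)
              (lam : Fin p → ℝ),
              Mc ∈ Fset Hc δ (phiBound Hc δ η) η ∧
              (∀ i, Mg i ∈ Fset (Hg i) δ (phiBound (Hg i) δ η) η) ∧
              (∀ i, lam i ∈ Set.Icc (-1 : ℝ) 1) ∧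
              x = eucNorm c • (Vc *ᵥ (Mc *ᵥ e1))
                + ∑ i, lam i • (eucNorm (g i) • (Vg i *ᵥ (Mg i *ᵥ e1)))} :=
  stmt10_general A δ ε hδ hε c g Vc Hc Vg Hg hVc1 hVg1 hcb hgb η hsmallc hsmallg
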